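/- Extensionality for ∀-types (may): let u, v ∈ Val(∀α.σ) be closed values such that for all closed types τ, u τ ≅↓ctx v τ : σ[τ/α] (where w τ abbreviates let f = w in f τ). Then u ≅↓ctx v : ∀α.σ. -/

import Mathlib

set_option maxHeartbeats 1000000

namespace CountChoice

/-! ## Syntax: types and terms (de Bruijn indices) -/

/-- Types: type variables, unit, products, functions, recursive sum types
`μα.(τ₁+…+τₙ)` (the `μ` binds one type variable, common to all summands),
and universal types `∀α.τ`. -/
inductive Ty : Type where
  | var : ℕ → Ty
  | unit : Ty
  | prod : Ty → Ty → Ty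
  | arrow : Ty → Ty → Ty
  | mu : (m : ℕ) → (Fin m → Ty) → Ty
  | all : Ty → Ty

/-- Lifting a renaming under a binder. -/
def liftR (f : ℕ → ℕ) : ℕ → ℕ
  | 0 => 0
  | i + 1 => f i + 1

def Ty.rename (f : ℕ → ℕ) : Ty → Ty
  | .var i => .var (f i)
  | .unit => .unit
  | .prod a b => .prod (a.rename f) (b.rename f)
  | .arrow a b => .arrow (a.rename f) (b.rename f)
  | .mu m ts => .mu m (fun j => (ts j).rename (liftR f))
  | .all a => .all (a.rename (liftR f))

/-- Lifting a type substitution under a type binder. -/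
def liftS (σ : ℕ → Ty) : ℕ → Ty
  | 0 => .var 0
  | i + 1 => (σ i).rename Nat.succ

def Ty.subst (σ : ℕ → Ty) : Ty → Ty
  | .var i => σ i
  | .unit => .unit
  | .prod a b => .prod (a.subst σ) (b.subst σ)
  | .arrow a b => .arrow (a.subst σ) (b.subst σ)
  | .mu m ts => .mu m (fun j => (ts j).subst (liftS σ))
  | .all a => .all (a.subst (liftS σ))

/-- Extending a type substitution (cons). -/
def consTy (τ : Ty) (σ : ℕ → Ty) : ℕ → Ty
  | 0 => τ
  | i + 1 => σ i

/-- `Ty.subst1 σ τ` is `τ[σ/α]`, substitution of `σ` for the innermost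
type variable of `τ`. -/
def Ty.subst1 (σ : Ty) (τ : Ty) : Ty := τ.subst (consTy σ Ty.var)

/-- `Ty.Wf Δ τ`: all free type variables of `τ` are among the first `Δ`. -/
def Ty.Wf : ℕ → Ty → Prop
  | Δ, .var i => i < Δ
  | _, .unit => True
  | Δ, .prod a b => a.Wf Δ ∧ b.Wf Δ
  | Δ, .arrow a b => a.Wf Δ ∧ b.Wf Δ
  | Δ, .mu _ ts => ∀ j, (ts j).Wf (Δ + 1)
  | Δ, .all a => a.Wf (Δ + 1)

/-- Terms.  `case v m es` is `case v of (in₁ x₁.e₁ | … | inₘ xₘ.eₘ)`;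
`choice` is the countable choice `?`; `proj false`/`proj true` are the two
projections; `tapp v τ` is type application `v τ`; `tlam` is `Λα.e`. -/
inductive Tm : Type where
  | var : ℕ → Tm
  | unit : Tm
  | pair : Tm → Tm → Tm
  | lam : Tm → Tm
  | inj : ℕ → Tm → Tm
  | tlam : Tm → Tm
  | choice : Tm
  | proj : Bool → Tm → Tm
  | app : Tm → Tm → Tm
  | case : Tm → (m : ℕ) → (Fin m → Tm) → Tm
  | tapp : Tm → Ty → Tm

/-- Values. -/
inductive IsVal : Tm → Prop where
  | var : ∀ {x}, IsVal (.var x)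
  | unit : IsVal .unit
  | pair : ∀ {v₁ v₂}, IsVal v₁ → IsVal v₂ → IsVal (.pair v₁ v₂)
  | lam : ∀ {e}, IsVal (.lam e)
  | inj : ∀ {j v}, IsVal v → IsVal (.inj j v)
  | tlam : ∀ {e}, IsVal (.tlam e)

/-- Renaming of term variables. -/
def Tm.rename (f : ℕ → ℕ) : Tm → Tm
  | .var i => .var (f i)
  | .unit => .unit
  | .pair a b => .pair (a.rename f) (b.rename f)
  | .lam e => .lam (e.rename (liftR f))
  | .inj j v => .inj j (v.rename f)
  | .tlam e => .tlam (e.rename f)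
  | .choice => .choice
  | .proj b v => .proj b (v.rename f)
  | .app a b => .app (a.rename f) (b.rename f)
  | .case v m es => .case (v.rename f) m (fun j => (es j).rename (liftR f))
  | .tapp v τ => .tapp (v.rename f) τ

/-- Renaming of type variables inside a term. -/
def Tm.tyRename (f : ℕ → ℕ) : Tm → Tm
  | .var i => .var i
  | .unit => .unit
  | .pair a b => .pair (a.tyRename f) (b.tyRename f)
  | .lam e => .lam (e.tyRename f)
  | .inj j v => .inj j (v.tyRename f)
  | .tlam e => .tlam (e.tyRename (liftR f))
  | .choice => .choice
  | .proj b v => .proj b (v.tyRename f)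
  | .app a b => .app (a.tyRename f) (b.tyRename f)
  | .case v m es => .case (v.tyRename f) m (fun j => (es j).tyRename f)
  | .tapp v τ => .tapp (v.tyRename f) (τ.rename f)

/-- Lifting a term substitution under a term binder. -/
def liftT (σ : ℕ → Tm) : ℕ → Tm
  | 0 => .var 0
  | i + 1 => (σ i).rename Nat.succ

/-- Substitution of terms for term variables. -/
def Tm.subst (σ : ℕ → Tm) : Tm → Tm
  | .var i => σ i
  | .unit => .unit
  | .pair a b => .pair (a.subst σ) (b.subst σ)
  | .lam e => .lam (e.subst (liftT σ))
  | .inj j v => .inj j (v.subst σ)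
  | .tlam e => .tlam (e.subst (fun i => (σ i).tyRename Nat.succ))
  | .choice => .choice
  | .proj b v => .proj b (v.subst σ)
  | .app a b => .app (a.subst σ) (b.subst σ)
  | .case v m es => .case (v.subst σ) m (fun j => (es j).subst (liftT σ))
  | .tapp v τ => .tapp (v.subst σ) τ

/-- Substitution of types for type variables inside a term. -/
def Tm.tySubst (σ : ℕ → Ty) : Tm → Tm
  | .var i => .var i
  | .unit => .unit
  | .pair a b => .pair (a.tySubst σ) (b.tySubst σ)
  | .lam e => .lam (e.tySubst σ)
  | .inj j v => .inj j (v.tySubst σ)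
  | .tlam e => .tlam (e.tySubst (liftS σ))
  | .choice => .choice
  | .proj b v => .proj b (v.tySubst σ)
  | .app a b => .app (a.tySubst σ) (b.tySubst σ)
  | .case v m es => .case (v.tySubst σ) m (fun j => (es j).tySubst σ)
  | .tapp v τ => .tapp (v.tySubst σ) (τ.subst σ)

/-- Extending a term substitution (cons). -/
def consTm (v : Tm) (σ : ℕ → Tm) : ℕ → Tm
  | 0 => v
  | i + 1 => σ i

/-- `subst1 v e` is `e[v/x]` for the innermost term variable. -/
def subst1 (v : Tm) (e : Tm) : Tm := e.subst (consTm v Tm.var)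

/-- `tySubst1 σ e` is `e[σ/α]` for the innermost type variable. -/
def tySubst1 (σ : Ty) (e : Tm) : Tm := e.tySubst (consTy σ Ty.var)

/-- A term is closed if it is invariant under all term- and type-variable
substitutions. -/
def Tm.Closed (e : Tm) : Prop :=
  (∀ σ : ℕ → Tm, e.subst σ = e) ∧ (∀ σ : ℕ → Ty, e.tySubst σ = e)

/-! ## Numerals and the type of natural numbers -/

/-- `nat = μα.(1+α)`. -/
def natTy : Ty := .mu 2 ![.unit, .var 0]

/-- Numerals `n̲`. -/
def numeral : ℕ → Tm
  | 0 => .inj 0 .unit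
  | n + 1 => .inj 1 (numeral n)

/-! ## Operational semantics -/

/-- Labels classifying reduction steps.  `unfold` labels the unfold-fold
(case) reductions, `choice` labels the `? ↦ n̲` reductions. -/
inductive Lbl : Type where
  | beta | projred | tbeta | unfold | choice

/-- Labeled one-step reduction. -/
inductive Step : Tm → Lbl → Tm → Prop where
  | projFst : ∀ {v₁ v₂}, IsVal v₁ → IsVal v₂ →
      Step (.proj false (.pair v₁ v₂)) .projred v₁
  | projSnd : ∀ {v₁ v₂}, IsVal v₁ → IsVal v₂ →
      Step (.proj true (.pair v₁ v₂)) .projred v₂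
  | beta : ∀ {e v}, IsVal v → Step (.app (.lam e) v) .beta (subst1 v e)
  | tbeta : ∀ {e τ}, Step (.tapp (.tlam e) τ) .tbeta (tySubst1 τ e)
  | caseInj : ∀ {m : ℕ} {es : Fin m → Tm} {j : ℕ} {v} (h : j < m), IsVal v →
      Step (.case (.inj j v) m es) .unfold (subst1 v (es ⟨j, h⟩))
  | choice : ∀ n : ℕ, Step .choice .choice (numeral n)
  | appArg : ∀ {v e l e'}, IsVal v → Step e l e' → Step (.app v e) l (.app v e')

/-- One-step reduction `e ↦ e'`. -/
def Red (e e' : Tm) : Prop := ∃ l, Step e l e'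

/-- `StepsU e n e'`: `e ↦* e'` with exactly `n` unfold-fold reductions in
the sequence. -/
inductive StepsU : Tm → ℕ → Tm → Prop where
  | refl : ∀ {e}, StepsU e 0 e
  | unfold : ∀ {e e₁ n e₂}, Step e .unfold e₁ → StepsU e₁ n e₂ → StepsU e (n + 1) e₂
  | other : ∀ {e l e₁ n e₂}, l ≠ .unfold → Step e l e₁ → StepsU e₁ n e₂ → StepsU e n e₂

/-- May-convergence `e↓`. -/
def MayConv (e : Tm) : Prop := ∃ n v, StepsU e n v ∧ IsVal v

/-- `e↓ₙ`: `e` reduces to a value with at most `n` unfold-fold reductions. -/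
def MayConvN (e : Tm) (n : ℕ) : Prop := ∃ m ≤ n, ∃ v, StepsU e m v ∧ IsVal v

/-- `e ⇝¹ e'`: `e ↦* e'` with exactly one unfold-fold reduction. -/
def UnfoldOne (e e' : Tm) : Prop := StepsU e 1 e'

/-- `e ⇝ᵖ e'`: `e ↦* e'` with no choice reductions. -/
inductive PSteps : Tm → Tm → Prop where
  | refl : ∀ {e}, PSteps e e
  | step : ∀ {e l e₁ e₂}, l ≠ .choice → Step e l e₁ → PSteps e₁ e₂ → PSteps e e₂

/-- `e ⇝ᵖ⁰ e'`: `e ↦* e'` with no choice reductions and no unfold-fold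
reductions. -/
inductive P0Steps : Tm → Tm → Prop where
  | refl : ∀ {e}, P0Steps e e
  | step : ∀ {e l e₁ e₂}, l ≠ .choice → l ≠ .unfold → Step e l e₁ →
      P0Steps e₁ e₂ → P0Steps e e₂

/-- Must-convergence `e⇓`: the least predicate closed under the rule
"if every one-step reduct of `e` must-converges then so does `e`". -/
inductive Must : Tm → Prop where
  | intro : ∀ {e}, (∀ e', Red e e' → Must e') → Must e

/-- The least uncountable ordinal `ω₁`. -/
noncomputable def omega1 : Ordinal.{0} := (Cardinal.aleph 1).ord

/-- The stratified predicate `e↯_β`, defined by ordinal induction: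
`e↯_β` iff every one-step reduct `e'` of `e` satisfies `e'↯_ν`
for some `ν < β`. -/
def Lightning (β : Ordinal.{0}) (e : Tm) : Prop :=
  ∀ e', Red e e' → ∃ ν : {ν : Ordinal.{0} // ν < β}, Lightning ν.1 e'
termination_by β
decreasing_by exact ν.2

/-- The stratified must-convergence predicate `e⇓_β`, defined by ordinal
induction: `e⇓_β` iff whenever `e ⇝¹ e'` there is `ν < β` with `e'⇓_ν`. -/
def MustStrat (β : Ordinal.{0}) (e : Tm) : Prop :=
  ∀ e', UnfoldOne e e' → ∃ ν : {ν : Ordinal.{0} // ν < β}, MustStrat ν.1 e'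
termination_by β
decreasing_by exact ν.2

/-! ## Typing -/

/-- `Δ ⊢ Γ`: all types in the context are well-formed in `Δ`. -/
def CtxWf (Δ : ℕ) (Γ : List Ty) : Prop := ∀ τ ∈ Γ, Ty.Wf Δ τ

/-- The typing judgement `Δ;Γ ⊢ e : τ` (`Δ` counts type variables, `Γ` is the
list of types of term variables, innermost first). -/
inductive HasTy : ℕ → List Ty → Tm → Ty → Prop where
  | var : ∀ {Δ Γ x τ}, CtxWf Δ Γ → Γ[x]? = some τ → HasTy Δ Γ (.var x) τ
  | unit : ∀ {Δ Γ}, CtxWf Δ Γ → HasTy Δ Γ .unit .unit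
  | pair : ∀ {Δ Γ v₁ v₂ τ₁ τ₂}, IsVal v₁ → IsVal v₂ →
      HasTy Δ Γ v₁ τ₁ → HasTy Δ Γ v₂ τ₂ → HasTy Δ Γ (.pair v₁ v₂) (.prod τ₁ τ₂)
  | lam : ∀ {Δ Γ e τ₁ τ₂}, Ty.Wf Δ τ₁ → HasTy Δ (τ₁ :: Γ) e τ₂ →
      HasTy Δ Γ (.lam e) (.arrow τ₁ τ₂)
  | inj : ∀ {Δ Γ v} {m : ℕ} {ts : Fin m → Ty} {j : ℕ} (h : j < m), IsVal v →
      Ty.Wf Δ (.mu m ts) →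
      HasTy Δ Γ v (Ty.subst1 (.mu m ts) (ts ⟨j, h⟩)) →
      HasTy Δ Γ (.inj j v) (.mu m ts)
  | tlam : ∀ {Δ Γ e τ}, HasTy (Δ + 1) (Γ.map (Ty.rename Nat.succ)) e τ →
      HasTy Δ Γ (.tlam e) (.all τ)
  | proj : ∀ {Δ Γ v τ₁ τ₂} (b : Bool), IsVal v → HasTy Δ Γ v (.prod τ₁ τ₂) →
      HasTy Δ Γ (.proj b v) (bif b then τ₂ else τ₁)
  | app : ∀ {Δ Γ v e τ₁ τ₂}, IsVal v → HasTy Δ Γ v (.arrow τ₁ τ₂) →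
      HasTy Δ Γ e τ₁ → HasTy Δ Γ (.app v e) τ₂
  | case : ∀ {Δ Γ v τ'} {m : ℕ} {ts : Fin m → Ty} {es : Fin m → Tm}, IsVal v →
      HasTy Δ Γ v (.mu m ts) →
      (∀ j : Fin m, HasTy Δ (Ty.subst1 (.mu m ts) (ts j) :: Γ) (es j) τ') →
      HasTy Δ Γ (.case v m es) τ'
  | tapp : ∀ {Δ Γ v τ σ}, IsVal v → HasTy Δ Γ v (.all τ) → Ty.Wf Δ σ →
      HasTy Δ Γ (.tapp v σ) (Ty.subst1 σ τ)
  | choice : ∀ {Δ Γ}, CtxWf Δ Γ → HasTy Δ Γ .choice natTy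

/-! ## Evaluation contexts -/

/-- Evaluation contexts `E ::= [] | v E` are represented as lists of the
applied values, outermost first. -/
def plug (E : List Tm) (e : Tm) : Tm := E.foldr .app e

/-- Typing of evaluation contexts, `⊢ E : τ ⊸ τ'`. -/
inductive ECtxTy : List Tm → Ty → Ty → Prop where
  | nil : ∀ {τ}, Ty.Wf 0 τ → ECtxTy [] τ τ
  | cons : ∀ {v E τ₁ τ τ₂}, IsVal v → HasTy 0 [] v (.arrow τ τ₂) →
      ECtxTy E τ₁ τ → ECtxTy (v :: E) τ₁ τ₂

/-! ## CIU preorders -/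

/-- A closing type substitution `δ ∈ Type^Δ`. -/
def TySubstOK (Δ : ℕ) (δ : ℕ → Ty) : Prop := ∀ i < Δ, Ty.Wf 0 (δ i)

/-- A type-respecting closing value substitution `γ ∈ Subst(Γ)`. -/
def SubstOK (Γ : List Ty) (γ : ℕ → Tm) : Prop :=
  ∀ i τ, Γ[i]? = some τ → IsVal (γ i) ∧ HasTy 0 [] (γ i) τ

/-- The may-CIU preorder `Δ;Γ ⊢ e ≾↓ciu e' : τ`. -/
def CiuMay (Δ : ℕ) (Γ : List Ty) (e e' : Tm) (τ : Ty) : Prop :=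
  HasTy Δ Γ e τ ∧ HasTy Δ Γ e' τ ∧
  ∀ δ, TySubstOK Δ δ → ∀ γ, SubstOK (Γ.map (Ty.subst δ)) γ →
  ∀ E τ', ECtxTy E (τ.subst δ) τ' →
  MayConv (plug E ((e.tySubst δ).subst γ)) → MayConv (plug E ((e'.tySubst δ).subst γ))

/-- The must-CIU preorder `Δ;Γ ⊢ e ≾⇓ciu e' : τ`. -/
def CiuMust (Δ : ℕ) (Γ : List Ty) (e e' : Tm) (τ : Ty) : Prop :=
  HasTy Δ Γ e τ ∧ HasTy Δ Γ e' τ ∧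
  ∀ δ, TySubstOK Δ δ → ∀ γ, SubstOK (Γ.map (Ty.subst δ)) γ →
  ∀ E τ', ECtxTy E (τ.subst δ) τ' →
  Must (plug E ((e.tySubst δ).subst γ)) → Must (plug E ((e'.tySubst δ).subst γ))

/-! ## Type-indexed relations, precongruences and contextual approximation -/

/-- A type-indexed relation. -/
def TIRel : Type := ℕ → List Ty → Tm → Tm → Ty → Prop

/-- A type-indexed relation relates only well-typed terms. -/
def WellTypedRel (R : TIRel) : Prop :=
  ∀ Δ Γ e e' τ, R Δ Γ e e' τ → HasTy Δ Γ e τ ∧ HasTy Δ Γ e' τ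

def ReflRel (R : TIRel) : Prop := ∀ Δ Γ e τ, HasTy Δ Γ e τ → R Δ Γ e e τ

def TransRel (R : TIRel) : Prop :=
  ∀ Δ Γ e₁ e₂ e₃ τ, R Δ Γ e₁ e₂ τ → R Δ Γ e₂ e₃ τ → R Δ Γ e₁ e₃ τ

/-- The compatibility rules (one for each term former). -/
structure Compatible (R : TIRel) : Prop where
  var : ∀ {Δ Γ x τ}, CtxWf Δ Γ → Γ[x]? = some τ → R Δ Γ (.var x) (.var x) τ
  unit : ∀ {Δ Γ}, CtxWf Δ Γ → R Δ Γ .unit .unit .unit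
  pair : ∀ {Δ Γ v₁ v₂ v₁' v₂' τ₁ τ₂}, IsVal v₁ → IsVal v₂ → IsVal v₁' → IsVal v₂' →
      R Δ Γ v₁ v₁' τ₁ → R Δ Γ v₂ v₂' τ₂ →
      R Δ Γ (.pair v₁ v₂) (.pair v₁' v₂') (.prod τ₁ τ₂)
  lam : ∀ {Δ Γ e e' τ₁ τ₂}, Ty.Wf Δ τ₁ → R Δ (τ₁ :: Γ) e e' τ₂ →
      R Δ Γ (.lam e) (.lam e') (.arrow τ₁ τ₂)
  inj : ∀ {Δ Γ v v'} {m : ℕ} {ts : Fin m → Ty} {j : ℕ} (h : j < m),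
      IsVal v → IsVal v' → Ty.Wf Δ (.mu m ts) →
      R Δ Γ v v' (Ty.subst1 (.mu m ts) (ts ⟨j, h⟩)) →
      R Δ Γ (.inj j v) (.inj j v') (.mu m ts)
  tlam : ∀ {Δ Γ e e' τ}, R (Δ + 1) (Γ.map (Ty.rename Nat.succ)) e e' τ →
      R Δ Γ (.tlam e) (.tlam e') (.all τ)
  proj : ∀ {Δ Γ v v' τ₁ τ₂} (b : Bool), IsVal v → IsVal v' →
      R Δ Γ v v' (.prod τ₁ τ₂) →
      R Δ Γ (.proj b v) (.proj b v') (bif b then τ₂ else τ₁)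
  app : ∀ {Δ Γ v v' e e' τ₁ τ₂}, IsVal v → IsVal v' →
      R Δ Γ v v' (.arrow τ₁ τ₂) → R Δ Γ e e' τ₁ →
      R Δ Γ (.app v e) (.app v' e') τ₂
  case : ∀ {Δ Γ v v' τ'} {m : ℕ} {ts : Fin m → Ty} {es es' : Fin m → Tm},
      IsVal v → IsVal v' → R Δ Γ v v' (.mu m ts) →
      (∀ j : Fin m, R Δ (Ty.subst1 (.mu m ts) (ts j) :: Γ) (es j) (es' j) τ') →
      R Δ Γ (.case v m es) (.case v' m es') τ'
  tapp : ∀ {Δ Γ v v' τ σ}, IsVal v → IsVal v' → R Δ Γ v v' (.all τ) →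
      Ty.Wf Δ σ → R Δ Γ (.tapp v σ) (.tapp v' σ) (Ty.subst1 σ τ)
  choice : ∀ {Δ Γ}, CtxWf Δ Γ → R Δ Γ .choice .choice natTy

/-- May-adequacy. -/
def MayAdequate (R : TIRel) : Prop :=
  ∀ e e' τ, R 0 [] e e' τ → MayConv e → MayConv e'

/-- Must-adequacy. -/
def MustAdequate (R : TIRel) : Prop :=
  ∀ e e' τ, R 0 [] e e' τ → Must e → Must e'

/-- May-contextual approximation `Δ;Γ ⊢ e ≾↓ctx e' : τ`: the largest
may-adequate precongruence. -/
def CtxMay (Δ : ℕ) (Γ : List Ty) (e e' : Tm) (τ : Ty) : Prop :=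
  ∃ R : TIRel, WellTypedRel R ∧ ReflRel R ∧ TransRel R ∧ Compatible R ∧
    MayAdequate R ∧ R Δ Γ e e' τ

/-- Must-contextual approximation `Δ;Γ ⊢ e ≾⇓ctx e' : τ`: the largest
must-adequate precongruence. -/
def CtxMust (Δ : ℕ) (Γ : List Ty) (e e' : Tm) (τ : Ty) : Prop :=
  ∃ R : TIRel, WellTypedRel R ∧ ReflRel R ∧ TransRel R ∧ Compatible R ∧
    MustAdequate R ∧ R Δ Γ e e' τ

/-- May-contextual equivalence `≅↓ctx`. -/
def CtxMayEq (Δ : ℕ) (Γ : List Ty) (e e' : Tm) (τ : Ty) : Prop :=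
  CtxMay Δ Γ e e' τ ∧ CtxMay Δ Γ e' e τ

/-- Must-contextual equivalence `≅⇓ctx`. -/
def CtxMustEq (Δ : ℕ) (Γ : List Ty) (e e' : Tm) (τ : Ty) : Prop :=
  CtxMust Δ Γ e e' τ ∧ CtxMust Δ Γ e' e τ

/-- Contextual equivalence `≅ctx` (intersection of may and must). -/
def CtxEq (Δ : ℕ) (Γ : List Ty) (e e' : Tm) (τ : Ty) : Prop :=
  CtxMayEq Δ Γ e e' τ ∧ CtxMustEq Δ Γ e e' τ

end CountChoice

namespace CountChoice

/-! ## Step-indexed uniform value relations and the may logical relation -/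

/-- Step-indexed relations on terms (indexed over `ω`). -/
def SIRel : Type := ℕ → Tm → Tm → Prop

/-- Extending a relational environment (cons). -/
def consRel (r : SIRel) (ρ : ℕ → SIRel) : ℕ → SIRel
  | 0 => r
  | i + 1 => ρ i

/-- `r ∈ VRel_ω(σ,σ')`: an `ω`-indexed uniform relation on `Val(σ) × Val(σ')`:
it relates only closed values of the given types, its 0-th component is all of
`Val(σ) × Val(σ')`, and it is decreasing in the index. -/
def IsVRel (σ σ' : Ty) (r : SIRel) : Prop :=
  (∀ n v v', r n v v' → (IsVal v ∧ HasTy 0 [] v σ) ∧ (IsVal v' ∧ HasTy 0 [] v' σ')) ∧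
  (∀ v v', IsVal v → HasTy 0 [] v σ → IsVal v' → HasTy 0 [] v' σ' → r 0 v v') ∧
  (∀ n v v', r (n + 1) v v' → r n v v')

/-- The lift `r⊤` of a step-indexed relation to evaluation contexts
(for may-convergence). -/
def sTopMay (r : SIRel) (n : ℕ) (E E' : List Tm) : Prop :=
  ∀ j ≤ n, ∀ v v', r j v v' → MayConvN (plug E v) j → MayConv (plug E' v')

/-- The biorthogonal lift `r⊤⊤` of a step-indexed relation to terms
(for may-convergence). -/
def ttopMay (r : SIRel) : SIRel := fun n e e' =>
  ∀ j ≤ n, ∀ E E', sTopMay r j E E' → MayConvN (plug E e) j → MayConv (plug E' e')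

/-- The may logical relation `⟦τ⟧(r⃗)`, given closing type substitutions
`δ, δ'` and a relational environment `ρ` with `ρ i ∈ VRel_ω(δ i, δ' i)`;
it is an `ω`-indexed uniform relation on `Val(τδ) × Val(τδ')`.
Recursive types are interpreted by the unique (guarded) fixed point
`fix s.⋃ⱼ inⱼ(▷⟦τⱼ⟧(r⃗,s))`, where `(▷R)ₙ = ⋂_{k<n} Rₖ`. -/
def interpMay : Ty → (ℕ → Ty) → (ℕ → Ty) → (ℕ → SIRel) → SIRel
  | .var i, _, _, ρ => ρ i
  | .unit, _, _, _ => fun _ v v' => v = .unit ∧ v' = .unit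
  | .prod τ₁ τ₂, δ, δ', ρ => fun n v v' =>
      ∃ v₁ v₂ v₁' v₂', v = .pair v₁ v₂ ∧ v' = .pair v₁' v₂' ∧
        interpMay τ₁ δ δ' ρ n v₁ v₁' ∧ interpMay τ₂ δ δ' ρ n v₂ v₂'
  | .arrow τ₁ τ₂, δ, δ', ρ => fun n v v' =>
      ∃ e e', v = .lam e ∧ v' = .lam e' ∧
        HasTy 0 [] v ((Ty.arrow τ₁ τ₂).subst δ) ∧
        HasTy 0 [] v' ((Ty.arrow τ₁ τ₂).subst δ') ∧
        ∀ m ≤ n, ∀ u u', interpMay τ₁ δ δ' ρ m u u' →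
          ttopMay (interpMay τ₂ δ δ' ρ) m (subst1 u e) (subst1 u' e')
  | .all τ, δ, δ', ρ => fun n v v' =>
      ∃ e e', v = .tlam e ∧ v' = .tlam e' ∧
        HasTy 0 [] v ((Ty.all τ).subst δ) ∧
        HasTy 0 [] v' ((Ty.all τ).subst δ') ∧
        ∀ σ σ', Ty.Wf 0 σ → Ty.Wf 0 σ' → ∀ r : SIRel, IsVRel σ σ' r →
          ttopMay (interpMay τ (consTy σ δ) (consTy σ' δ') (consRel r ρ)) n
            (tySubst1 σ e) (tySubst1 σ' e')
  | .mu m ts, δ, δ', ρ => fun n =>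
      Nat.strongRecOn (motive := fun _ => Tm → Tm → Prop) n
        (fun n ih v v' =>
          ∃ j, ∃ h : j < m, ∃ u u',
            v = .inj j u ∧ v' = .inj j u' ∧ IsVal u ∧ IsVal u' ∧
            HasTy 0 [] u (Ty.subst (consTy ((Ty.mu m ts).subst δ) δ) (ts ⟨j, h⟩)) ∧
            HasTy 0 [] u' (Ty.subst (consTy ((Ty.mu m ts).subst δ') δ') (ts ⟨j, h⟩)) ∧
            ∀ k, k < n →
              interpMay (ts ⟨j, h⟩)
                (consTy ((Ty.mu m ts).subst δ) δ)
                (consTy ((Ty.mu m ts).subst δ') δ')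
                (consRel (fun i u₁ u₂ => ∃ hi : i < n, ih i hi u₁ u₂) ρ) k u u')

/-- Pointwise relatedness of value substitutions, `(γ,γ') ∈ ⟦Γ⟧(r⃗)ₙ`. -/
def EnvRelMay (Γ : List Ty) (δ δ' : ℕ → Ty) (ρ : ℕ → SIRel) (n : ℕ)
    (γ γ' : ℕ → Tm) : Prop :=
  ∀ i τ, Γ[i]? = some τ → interpMay τ δ δ' ρ n (γ i) (γ' i)

/-- Logical may-approximation `Δ;Γ ⊢ e ≾↓log e' : τ`. -/
def LogMay (Δ : ℕ) (Γ : List Ty) (e e' : Tm) (τ : Ty) : Prop :=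
  HasTy Δ Γ e τ ∧ HasTy Δ Γ e' τ ∧
  ∀ δ δ', TySubstOK Δ δ → TySubstOK Δ δ' →
  ∀ ρ : ℕ → SIRel, (∀ i < Δ, IsVRel (δ i) (δ' i) (ρ i)) →
  ∀ n γ γ', EnvRelMay Γ δ δ' ρ n γ γ' →
  ttopMay (interpMay τ δ δ' ρ) n ((e.tySubst δ).subst γ) ((e'.tySubst δ').subst γ')

end CountChoice

namespace CountChoice

/-! ## Ordinal-indexed uniform value relations and the must logical relation -/

/-- Ordinal-indexed relations on terms. -/
def OSIRel : Type 1 := Ordinal.{0} → Tm → Tm → Prop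

/-- Extending an ordinal-indexed relational environment (cons). -/
def consORel (r : OSIRel) (ρ : ℕ → OSIRel) : ℕ → OSIRel
  | 0 => r
  | i + 1 => ρ i

/-- `r ∈ VRel_ω₁(σ,σ')`: an ordinal-indexed uniform relation on
`Val(σ) × Val(σ')`: it relates only closed values of the given types, its
0-th component is all of `Val(σ) × Val(σ')`, it is decreasing at successors
and it is the intersection of the earlier components at limits. -/
def IsOVRel (σ σ' : Ty) (r : OSIRel) : Prop :=
  (∀ β v v', r β v v' → (IsVal v ∧ HasTy 0 [] v σ) ∧ (IsVal v' ∧ HasTy 0 [] v' σ')) ∧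
  (∀ v v', IsVal v → HasTy 0 [] v σ → IsVal v' → HasTy 0 [] v' σ' → r 0 v v') ∧
  (∀ β v v', r (β + 1) v v' → r β v v') ∧
  (∀ β, Order.IsSuccLimit β → ∀ v v', (r β v v' ↔ ∀ ν < β, r ν v v'))

/-- The lift `r⊤` of an ordinal-indexed relation to evaluation contexts
(for must-convergence). -/
def sTopMust (r : OSIRel) (β : Ordinal.{0}) (E E' : List Tm) : Prop :=
  ∀ ν ≤ β, ∀ v v', r ν v v' → MustStrat ν (plug E v) → Must (plug E' v')

/-- The biorthogonal lift `r⊤⊤` of an ordinal-indexed relation to terms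
(for must-convergence). -/
def ttopMust (r : OSIRel) : OSIRel := fun β e e' =>
  ∀ ν ≤ β, ∀ E E', sTopMust r ν E E' → MustStrat ν (plug E e) → Must (plug E' e')

/-- The must logical relation `⟦τ⟧(r⃗)`, an ordinal-indexed uniform relation,
defined exactly as the may logical relation but with the must-biorthogonal
lifts. -/
def interpMust : Ty → (ℕ → Ty) → (ℕ → Ty) → (ℕ → OSIRel) → OSIRel
  | .var i, _, _, ρ => ρ i
  | .unit, _, _, _ => fun _ v v' => v = .unit ∧ v' = .unit
  | .prod τ₁ τ₂, δ, δ', ρ => fun β v v' =>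
      ∃ v₁ v₂ v₁' v₂', v = .pair v₁ v₂ ∧ v' = .pair v₁' v₂' ∧
        interpMust τ₁ δ δ' ρ β v₁ v₁' ∧ interpMust τ₂ δ δ' ρ β v₂ v₂'
  | .arrow τ₁ τ₂, δ, δ', ρ => fun β v v' =>
      ∃ e e', v = .lam e ∧ v' = .lam e' ∧
        HasTy 0 [] v ((Ty.arrow τ₁ τ₂).subst δ) ∧
        HasTy 0 [] v' ((Ty.arrow τ₁ τ₂).subst δ') ∧
        ∀ ν ≤ β, ∀ u u', interpMust τ₁ δ δ' ρ ν u u' →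
          ttopMust (interpMust τ₂ δ δ' ρ) ν (subst1 u e) (subst1 u' e')
  | .all τ, δ, δ', ρ => fun β v v' =>
      ∃ e e', v = .tlam e ∧ v' = .tlam e' ∧
        HasTy 0 [] v ((Ty.all τ).subst δ) ∧
        HasTy 0 [] v' ((Ty.all τ).subst δ') ∧
        ∀ σ σ', Ty.Wf 0 σ → Ty.Wf 0 σ' → ∀ r : OSIRel, IsOVRel σ σ' r →
          ttopMust (interpMust τ (consTy σ δ) (consTy σ' δ') (consORel r ρ)) β
            (tySubst1 σ e) (tySubst1 σ' e')
  | .mu m ts, δ, δ', ρ => fun β =>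
      (wellFounded_lt (α := Ordinal.{0})).fix
        (C := fun _ => Tm → Tm → Prop)
        (fun β ih v v' =>
          ∃ j, ∃ h : j < m, ∃ u u',
            v = .inj j u ∧ v' = .inj j u' ∧ IsVal u ∧ IsVal u' ∧
            HasTy 0 [] u (Ty.subst (consTy ((Ty.mu m ts).subst δ) δ) (ts ⟨j, h⟩)) ∧
            HasTy 0 [] u' (Ty.subst (consTy ((Ty.mu m ts).subst δ') δ') (ts ⟨j, h⟩)) ∧
            ∀ ν, ν < β →
              interpMust (ts ⟨j, h⟩)
                (consTy ((Ty.mu m ts).subst δ) δ)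
                (consTy ((Ty.mu m ts).subst δ') δ')
                (consORel (fun i u₁ u₂ => ∃ hi : i < β, ih i hi u₁ u₂) ρ) ν u u')
        β

/-- Pointwise relatedness of value substitutions, `(γ,γ') ∈ ⟦Γ⟧(r⃗)_β`. -/
def EnvRelMust (Γ : List Ty) (δ δ' : ℕ → Ty) (ρ : ℕ → OSIRel) (β : Ordinal.{0})
    (γ γ' : ℕ → Tm) : Prop :=
  ∀ i τ, Γ[i]? = some τ → interpMust τ δ δ' ρ β (γ i) (γ' i)

/-- Logical must-approximation `Δ;Γ ⊢ e ≾⇓log e' : τ`. -/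
def LogMust (Δ : ℕ) (Γ : List Ty) (e e' : Tm) (τ : Ty) : Prop :=
  HasTy Δ Γ e τ ∧ HasTy Δ Γ e' τ ∧
  ∀ δ δ', TySubstOK Δ δ → TySubstOK Δ δ' →
  ∀ ρ : ℕ → OSIRel, (∀ i < Δ, IsOVRel (δ i) (δ' i) (ρ i)) →
  ∀ β < omega1, ∀ γ γ', EnvRelMust Γ δ δ' ρ β γ γ' →
  ttopMust (interpMust τ δ δ' ρ) β ((e.tySubst δ).subst γ) ((e'.tySubst δ').subst γ')

end CountChoice

namespace CountChoice

/-! ## Derived terms -/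

/-- `let x = e₁ in e₂`, i.e. `(λx.e₂) e₁`. -/
def letIn (e₁ e₂ : Tm) : Tm := .app (.lam e₂) e₁

/-- The term `δ_f = λy.case y of (in y'. f(λx.let r = y' y in r x))`,
where `f` is the term variable of de Bruijn index 0 outside. -/
def deltaTm : Tm :=
  .lam (.case (.var 0) 1
    ![.app (.var 2)
        (.lam (letIn (.app (.var 1) (.var 2)) (.app (.var 0) (.var 1))))])

/-- The fixed point combinator
`fix = Λα,β.λf.δ_f(in δ_f) : ∀α,β.((α→β)→(α→β))→(α→β)`. -/
def fixTm : Tm := .tlam (.tlam (.lam (.app deltaTm (.inj 0 deltaTm))))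

/-- `fix τ₁ τ₂ v`, i.e. `let x = fix τ₁ in let y = x τ₂ in y v`. -/
def fixApp (τ₁ τ₂ : Ty) (v : Tm) : Tm :=
  letIn (.tapp fixTm τ₁)
    (letIn (.tapp (.var 0) τ₂) (.app (.var 0) (v.rename (· + 2))))

/-- The identity `id = λx.x`. -/
def idTm : Tm := .lam (.var 0)

/-- The divergent term `Ω = Λα.(fix 1 α)(λf.f)⟨⟩ : ∀α.α`. -/
def OmegaTm : Tm :=
  .tlam (letIn (fixApp .unit (.var 0) (.lam (.var 0))) (.app (.var 0) .unit))

/-- Erratic choice `e₁ or e₂`, i.e.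
`let x = ? in case x of (in₁ y.e₁ | in₂ y.e₂)`. -/
def orTm (e₁ e₂ : Tm) : Tm :=
  letIn .choice (.case (.var 0) 2 ![e₁.rename (· + 2), e₂.rename (· + 2)])

/-- Type application of a term: `w τ` abbreviates `let f = w in f τ`. -/
def letTapp (w : Tm) (τ : Ty) : Tm := letIn w (.tapp (.var 0) τ)

/-- `(λx.x t) w`: applies (the eventual value of) `w` to the closed term `t`. -/
def letAppArg (w t : Tm) : Tm := .app (.lam (.app (.var 0) t)) w

end CountChoice

/-!
Write `u = Λα.b`. The compatible closure `C` of the single pair `(u, v)` at type `∀α.σ` is a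
well-typed, value-preserving relation that is stable under renaming and substitution, and its typed
reflexive-transitive closure is a precongruence containing `(u, v)`; it remains to see that it is
may-adequate. A reduction of `e` to a value is simulated step by step by any `C`-related `e'`,
except when `e` is at `E[u τ]` and `e'` at `E'[v τ]` with `E` and `E'` related. There `e` reduces
to `E[b[τ/α]]`, which is `C`-related to `E'[b[τ/α]]`, so by induction on the length of the reduction
`E'[b[τ/α]]`, and hence `E'[u τ]`, converges; the hypothesis `u τ ≾↓ctx v τ`, plugged into the
evaluation context `E'`, then makes `E'[v τ]` converge. Running the argument for `(u, v)` and for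
`(v, u)` gives both halves of the equivalence.
-/

namespace Relation

variable {α β : Type*} {r : α → α → Prop} {p : β → β → Prop}

theorem ReflTransGen.lift_of_invariant {P : α → Prop} (f : α → β)
    (hP : ∀ a b, r a b → P a → P b) (h : ∀ a b, r a b → P a → p (f a) (f b)) {a b : α}
    (hab : ReflTransGen r a b) (ha : P a) : ReflTransGen p (f a) (f b) := by
  induction hab using ReflTransGen.head_induction_on with
  | refl => exact .refl
  | head hac _ ih => exact .head (h _ _ hac ha) (ih (hP _ _ hac ha))

theorem ReflTransGen.pi {ι : Type*} [Finite ι] {r : ι → α → α → Prop} {f g : ι → α}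
    (hf : ∀ i, r i (f i) (f i)) (hg : ∀ i, r i (g i) (g i))
    (h : ∀ i, ReflTransGen (r i) (f i) (g i)) :
    ReflTransGen (fun x y => ∀ i, r i (x i) (y i)) f g := by
  classical
  have := Fintype.ofFinite ι
  let mix (s : Finset ι) (i : ι) : α := if i ∈ s then g i else f i
  have hmix_refl (s : Finset ι) (i : ι) : r i (mix s i) (mix s i) := by
    by_cases hi : i ∈ s <;> simp [mix, hi, hf, hg]
  have hmix (s : Finset ι) : ReflTransGen (fun x y => ∀ i, r i (x i) (y i)) f (mix s) := by
    induction s using Finset.induction_on with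
    | empty => simpa [mix] using ReflTransGen.refl
    | insert a s ha ih =>
        have hstart : Function.update (mix s) a (f a) = mix s := by
          ext i; rcases eq_or_ne i a with rfl | hi <;> simp [mix, *]
        have hend : Function.update (mix s) a (g a) = mix (insert a s) := by
          ext i; rcases eq_or_ne i a with rfl | hi <;> simp [mix, *]
        have hstep : ReflTransGen (fun x y => ∀ i, r i (x i) (y i))
            (Function.update (mix s) a (f a)) (Function.update (mix s) a (g a)) :=
          (h a).lift _ fun x y hxy i => by
            rcases eq_or_ne i a with rfl | hi
            · simpa using hxy
            · simpa [Function.update_of_ne hi] using hmix_refl s i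
        rw [hstart, hend] at hstep
        exact ih.trans hstep
  simpa [mix] using hmix Finset.univ

end Relation

namespace CountChoice

/-! ### Renaming and substitution -/

theorem liftR_comp (f g : ℕ → ℕ) : liftR f ∘ liftR g = liftR (f ∘ g) := by
  funext i; cases i <;> rfl

theorem liftS_comp_liftR (σ : ℕ → Ty) (g : ℕ → ℕ) : liftS σ ∘ liftR g = liftS (σ ∘ g) := by
  funext i; cases i <;> rfl

theorem liftS_var_comp (f : ℕ → ℕ) : liftS (Ty.var ∘ f) = Ty.var ∘ liftR f := by
  funext i; cases i <;> rfl

theorem liftS_var : liftS Ty.var = Ty.var := by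
  funext i; cases i <;> rfl

theorem liftR_lt {Δ Δ' : ℕ} {f : ℕ → ℕ} (hf : ∀ i < Δ, f i < Δ') :
    ∀ i < Δ + 1, liftR f i < Δ' + 1
  | 0, _ => Nat.succ_pos _
  | i + 1, hi => Nat.succ_lt_succ (hf i (Nat.lt_of_succ_lt_succ hi))

theorem lt_of_liftR_lt {Δ Δ' : ℕ} {f : ℕ → ℕ} (hf : ∀ i, f i < Δ' → i < Δ) :
    ∀ i, liftR f i < Δ' + 1 → i < Δ + 1
  | 0, _ => Nat.succ_pos _
  | i + 1, hi => Nat.succ_lt_succ (hf i (Nat.lt_of_succ_lt_succ hi))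

theorem consTy_var_wf {Δ : ℕ} {τ : Ty} (hτ : τ.Wf Δ) : ∀ i < Δ + 1, (consTy τ Ty.var i).Wf Δ
  | 0, _ => hτ
  | _ + 1, hi => Nat.lt_of_succ_lt_succ hi

namespace Ty

theorem rename_rename (f g : ℕ → ℕ) (τ : Ty) : (τ.rename g).rename f = τ.rename (f ∘ g) := by
  induction τ generalizing f g <;> simp_all [rename, liftR_comp]

theorem subst_rename (σ : ℕ → Ty) (g : ℕ → ℕ) (τ : Ty) :
    (τ.rename g).subst σ = τ.subst (σ ∘ g) := by
  induction τ generalizing σ g <;> simp_all [rename, subst, liftS_comp_liftR]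

theorem rename_comp_liftS (f : ℕ → ℕ) (σ : ℕ → Ty) :
    rename (liftR f) ∘ liftS σ = liftS (rename f ∘ σ) := by
  funext i; cases i
  · rfl
  · simp only [Function.comp_apply, liftS, rename_rename]; rfl

theorem rename_subst (f : ℕ → ℕ) (σ : ℕ → Ty) (τ : Ty) :
    (τ.subst σ).rename f = τ.subst (rename f ∘ σ) := by
  induction τ generalizing f σ <;> simp_all [rename, subst, rename_comp_liftS]

theorem subst_comp_liftS (σ' σ : ℕ → Ty) :
    subst (liftS σ') ∘ liftS σ = liftS (subst σ' ∘ σ) := by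
  funext i; cases i
  · rfl
  · simp only [Function.comp_apply, liftS, subst_rename, rename_subst]; rfl

theorem subst_subst (σ' σ : ℕ → Ty) (τ : Ty) :
    (τ.subst σ).subst σ' = τ.subst (subst σ' ∘ σ) := by
  induction τ generalizing σ' σ <;> simp_all [subst, subst_comp_liftS]

theorem subst_var (τ : Ty) : τ.subst var = τ := by
  induction τ <;> simp_all [subst, liftS_var]

theorem rename_eq_subst (f : ℕ → ℕ) (τ : Ty) : τ.rename f = τ.subst (var ∘ f) := by
  induction τ generalizing f <;> simp_all [rename, subst, liftS_var_comp]

theorem subst1_subst (A B : Ty) (δ : ℕ → Ty) :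
    (subst1 A B).subst δ = subst1 (A.subst δ) (B.subst (liftS δ)) := by
  simp only [subst1, subst_subst]
  congr 1
  funext i; cases i
  · rfl
  · simp only [Function.comp_apply, consTy, liftS, subst_rename]
    exact (subst_var _).symm

theorem rename_succ_subst_liftS (δ : ℕ → Ty) (τ : Ty) :
    (τ.rename Nat.succ).subst (liftS δ) = (τ.subst δ).rename Nat.succ := by
  rw [subst_rename, rename_subst]; rfl

theorem wf_rename {Δ Δ' : ℕ} {f : ℕ → ℕ} (hf : ∀ i < Δ, f i < Δ') {τ : Ty} (h : τ.Wf Δ) :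
    (τ.rename f).Wf Δ' := by
  induction τ generalizing Δ Δ' f with
  | var i => exact hf i h
  | unit => trivial
  | prod a b iha ihb => exact ⟨iha hf h.1, ihb hf h.2⟩
  | arrow a b iha ihb => exact ⟨iha hf h.1, ihb hf h.2⟩
  | mu m ts ih => exact fun j => ih j (liftR_lt hf) (h j)
  | all a ih => exact ih (liftR_lt hf) h

theorem wf_of_wf_rename {Δ Δ' : ℕ} {f : ℕ → ℕ} (hf : ∀ i, f i < Δ' → i < Δ) {τ : Ty}
    (h : (τ.rename f).Wf Δ') : τ.Wf Δ := by
  induction τ generalizing Δ Δ' f with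
  | var i => exact hf i h
  | unit => trivial
  | prod a b iha ihb => exact ⟨iha hf h.1, ihb hf h.2⟩
  | arrow a b iha ihb => exact ⟨iha hf h.1, ihb hf h.2⟩
  | mu m ts ih => exact fun j => ih j (lt_of_liftR_lt hf) (h j)
  | all a ih => exact ih (lt_of_liftR_lt hf) h

theorem liftS_wf {Δ Δ' : ℕ} {σ : ℕ → Ty} (hσ : ∀ i < Δ, (σ i).Wf Δ') :
    ∀ i < Δ + 1, (liftS σ i).Wf (Δ' + 1)
  | 0, _ => Nat.succ_pos _
  | i + 1, hi => wf_rename (fun _ => Nat.succ_lt_succ) (hσ i (Nat.lt_of_succ_lt_succ hi))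

theorem wf_subst {Δ Δ' : ℕ} {σ : ℕ → Ty} (hσ : ∀ i < Δ, (σ i).Wf Δ') {τ : Ty} (h : τ.Wf Δ) :
    (τ.subst σ).Wf Δ' := by
  induction τ generalizing Δ Δ' σ with
  | var i => exact hσ i h
  | unit => trivial
  | prod a b iha ihb => exact ⟨iha hσ h.1, ihb hσ h.2⟩
  | arrow a b iha ihb => exact ⟨iha hσ h.1, ihb hσ h.2⟩
  | mu m ts ih => exact fun j => ih j (liftS_wf hσ) (h j)
  | all a ih => exact ih (liftS_wf hσ) h

theorem wf_subst1 {Δ : ℕ} {τ σ : Ty} (hτ : τ.Wf Δ) (hσ : σ.Wf (Δ + 1)) :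
    (subst1 τ σ).Wf Δ :=
  wf_subst (consTy_var_wf hτ) hσ

theorem wf_mono {Δ Δ' : ℕ} (hΔ : Δ ≤ Δ') {τ : Ty} (h : τ.Wf Δ) : τ.Wf Δ' := by
  simpa [subst_var] using wf_subst (σ := var) (fun i hi => Nat.lt_of_lt_of_le hi hΔ) h

theorem liftS_eq_var {Δ : ℕ} {σ : ℕ → Ty} (hσ : ∀ i < Δ, σ i = var i) :
    ∀ i < Δ + 1, liftS σ i = var i
  | 0, _ => rfl
  | i + 1, hi => by simp [liftS, hσ i (Nat.lt_of_succ_lt_succ hi), rename]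

theorem subst_eq_self_of_wf {Δ : ℕ} {σ : ℕ → Ty} (hσ : ∀ i < Δ, σ i = var i) {τ : Ty}
    (h : τ.Wf Δ) : τ.subst σ = τ := by
  induction τ generalizing Δ σ with
  | var i => exact hσ i h
  | unit => rfl
  | prod a b iha ihb => simp [subst, iha hσ h.1, ihb hσ h.2]
  | arrow a b iha ihb => simp [subst, iha hσ h.1, ihb hσ h.2]
  | mu m ts ih => simp [subst, fun j => ih j (liftS_eq_var hσ) (h j)]
  | all a ih => simp [subst, ih (liftS_eq_var hσ) h]

theorem subst_eq_self_of_closed {σ : ℕ → Ty} {τ : Ty} (h : τ.Wf 0) : τ.subst σ = τ :=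
  subst_eq_self_of_wf (fun _ hi => absurd hi (Nat.not_lt_zero _)) h

end Ty

theorem natTy_wf (Δ : ℕ) : natTy.Wf Δ := by
  intro j
  fin_cases j
  · trivial
  · exact Nat.succ_pos Δ

theorem liftT_var_comp (f : ℕ → ℕ) : liftT (Tm.var ∘ f) = Tm.var ∘ liftR f := by
  funext i; cases i <;> rfl

theorem liftT_eq_var {n : ℕ} {γ : ℕ → Tm} (hγ : ∀ i < n, γ i = .var i) :
    ∀ i < n + 1, liftT γ i = .var i
  | 0, _ => rfl
  | i + 1, hi => by simp [liftT, hγ i (Nat.lt_of_succ_lt_succ hi), Tm.rename]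

namespace Tm

theorem rename_eq_subst (f : ℕ → ℕ) (e : Tm) : e.rename f = e.subst (var ∘ f) := by
  induction e generalizing f <;> simp_all [rename, subst, liftT_var_comp, tyRename]
  rfl

theorem tyRename_eq_tySubst (f : ℕ → ℕ) (e : Tm) : e.tyRename f = e.tySubst (Ty.var ∘ f) := by
  induction e generalizing f <;>
    simp_all [tyRename, tySubst, liftS_var_comp, Ty.rename_eq_subst]

theorem Closed.rename_eq {e : Tm} (h : e.Closed) (f : ℕ → ℕ) : e.rename f = e := by
  rw [rename_eq_subst]; exact h.1 _

end Tm

namespace IsVal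

theorem rename {v : Tm} (hv : IsVal v) (f : ℕ → ℕ) : IsVal (v.rename f) := by
  induction hv <;> constructor <;> assumption

theorem tySubst {v : Tm} (hv : IsVal v) (δ : ℕ → Ty) : IsVal (v.tySubst δ) := by
  induction hv <;> constructor <;> assumption

theorem tyRename {v : Tm} (hv : IsVal v) (f : ℕ → ℕ) : IsVal (v.tyRename f) := by
  rw [Tm.tyRename_eq_tySubst]; exact hv.tySubst _

theorem subst {v : Tm} (hv : IsVal v) {γ : ℕ → Tm} (hγ : ∀ i, IsVal (γ i)) :
    IsVal (v.subst γ) := by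
  induction hv with
  | var => exact hγ _
  | _ => constructor <;> assumption

theorem not_step {v e : Tm} {l : Lbl} (hv : IsVal v) (hs : Step v l e) : False := by
  cases hs <;> cases hv

end IsVal

theorem liftT_isVal {γ : ℕ → Tm} (hγ : ∀ i, IsVal (γ i)) : ∀ i, IsVal (liftT γ i)
  | 0 => .var
  | i + 1 => (hγ i).rename _

theorem numeral_isVal : ∀ n, IsVal (numeral n)
  | 0 => .inj .unit
  | n + 1 => .inj (numeral_isVal n)

namespace CtxWf

theorem nil {Δ : ℕ} : CtxWf Δ [] := fun _ h => absurd h List.not_mem_nil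

theorem cons {Δ : ℕ} {τ : Ty} {Γ : List Ty} (hτ : τ.Wf Δ) (hΓ : CtxWf Δ Γ) :
    CtxWf Δ (τ :: Γ) := by
  rintro κ (_ | ⟨_, hκ⟩)
  · exact hτ
  · exact hΓ κ hκ

theorem map_rename {Δ Δ' : ℕ} {f : ℕ → ℕ} {Γ : List Ty} (hΓ : CtxWf Δ Γ)
    (hf : ∀ i < Δ, f i < Δ') : CtxWf Δ' (Γ.map (Ty.rename f)) := by
  simp only [CtxWf, List.mem_map]
  rintro _ ⟨τ, hτ, rfl⟩
  exact Ty.wf_rename hf (hΓ τ hτ)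

theorem map_subst {Δ Δ' : ℕ} {δ : ℕ → Ty} {Γ : List Ty} (hΓ : CtxWf Δ Γ)
    (hδ : ∀ i < Δ, (δ i).Wf Δ') : CtxWf Δ' (Γ.map (Ty.subst δ)) := by
  simp only [CtxWf, List.mem_map]
  rintro _ ⟨τ, hτ, rfl⟩
  exact Ty.wf_subst hδ (hΓ τ hτ)

end CtxWf

theorem getElem?_cons_liftR {Γ Γ' : List Ty} {f : ℕ → ℕ} (A : Ty)
    (hf : ∀ (x : ℕ) κ, Γ[x]? = some κ → Γ'[f x]? = some κ) :
    ∀ (x : ℕ) κ, (A :: Γ)[x]? = some κ → (A :: Γ')[liftR f x]? = some κ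
  | 0, _, h => h
  | x + 1, κ, h => hf x κ h

theorem getElem?_map_of_getElem? {Γ Γ' : List Ty} {f : ℕ → ℕ} (g : Ty → Ty)
    (hf : ∀ (x : ℕ) κ, Γ[x]? = some κ → Γ'[f x]? = some κ) :
    ∀ (x : ℕ) κ, (Γ.map g)[x]? = some κ → (Γ'.map g)[f x]? = some κ := by
  intro x κ h
  simp only [List.getElem?_map, Option.map_eq_some_iff] at h ⊢
  obtain ⟨κ', hκ', rfl⟩ := h
  exact ⟨κ', hf x κ' hκ', rfl⟩

namespace HasTy

theorem ctxWf {Δ : ℕ} {Γ : List Ty} {e : Tm} {τ : Ty} (h : HasTy Δ Γ e τ) : CtxWf Δ Γ := by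
  induction h with
  | var hΓ _ | unit hΓ | choice hΓ => exact hΓ
  | lam _ _ ih => exact fun κ hκ => ih κ (List.mem_cons_of_mem _ hκ)
  | tlam _ ih =>
      exact fun κ hκ => Ty.wf_of_wf_rename (fun _ => Nat.lt_of_succ_lt_succ)
        (ih _ (List.mem_map_of_mem hκ))
  | pair _ _ _ _ ih | inj _ _ _ _ ih | proj _ _ _ ih | app _ _ _ ih | case _ _ _ ih
  | tapp _ _ _ ih => exact ih

theorem weaken {Δ Δ' : ℕ} {Γ Γ' : List Ty} {e : Tm} {τ : Ty} (h : HasTy Δ Γ e τ)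
    (hΔ : Δ ≤ Δ') (hΓ : ∀ (x : ℕ) κ, Γ[x]? = some κ → Γ'[x]? = some κ) (hΓ' : CtxWf Δ' Γ') :
    HasTy Δ' Γ' e τ := by
  induction h generalizing Δ' Γ' with
  | var _ hx => exact .var hΓ' (hΓ _ _ hx)
  | unit => exact .unit hΓ'
  | pair h1 h2 _ _ ih1 ih2 => exact .pair h1 h2 (ih1 hΔ hΓ hΓ') (ih2 hΔ hΓ hΓ')
  | lam hτ _ ih =>
      have hτ' := Ty.wf_mono hΔ hτ
      exact .lam hτ' (ih hΔ (by rintro (_ | x) κ hx <;> simp_all) (.cons hτ' hΓ'))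
  | inj hj hval hwf _ ih => exact .inj hj hval (Ty.wf_mono hΔ hwf) (ih hΔ hΓ hΓ')
  | tlam _ ih =>
      exact .tlam (ih (Nat.succ_le_succ hΔ) (getElem?_map_of_getElem? (f := id) _ hΓ)
        (hΓ'.map_rename fun _ => Nat.succ_lt_succ))
  | proj b hval _ ih => exact .proj b hval (ih hΔ hΓ hΓ')
  | app hval _ _ ih1 ih2 => exact .app hval (ih1 hΔ hΓ hΓ') (ih2 hΔ hΓ hΓ')
  | case hval _ hbr ih ihs =>
      refine .case hval (ih hΔ hΓ hΓ') fun j => ihs j hΔ (by rintro (_ | x) κ hx <;> simp_all) ?_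
      exact .cons (Ty.wf_mono hΔ ((hbr j).ctxWf _ List.mem_cons_self)) hΓ'
  | tapp hval _ hσ ih => exact .tapp hval (ih hΔ hΓ hΓ') (Ty.wf_mono hΔ hσ)
  | choice => exact .choice hΓ'

theorem subst_eq_self {Δ : ℕ} {Γ : List Ty} {e : Tm} {τ : Ty} (h : HasTy Δ Γ e τ)
    {γ : ℕ → Tm} (hγ : ∀ i < Γ.length, γ i = .var i) : e.subst γ = e := by
  induction h generalizing γ with
  | var _ hx => exact hγ _ (List.getElem?_eq_some_iff.1 hx).1
  | lam _ _ ih => simp [Tm.subst, ih (liftT_eq_var hγ)]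
  | tlam _ ih =>
      simp only [Tm.subst]
      rw [ih fun i hi => by simp [hγ i (by simpa using hi), Tm.tyRename]]
  | case _ _ _ ih ihs => simp [Tm.subst, ih hγ, fun j => ihs j (liftT_eq_var hγ)]
  | _ => simp_all [Tm.subst]

theorem tySubst_eq_self {Δ : ℕ} {Γ : List Ty} {e : Tm} {τ : Ty} (h : HasTy Δ Γ e τ)
    {δ : ℕ → Ty} (hδ : ∀ i < Δ, δ i = .var i) : e.tySubst δ = e := by
  induction h generalizing δ with
  | tlam _ ih => simp [Tm.tySubst, ih (Ty.liftS_eq_var hδ)]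
  | tapp _ _ hσ ih => simp [Tm.tySubst, ih hδ, Ty.subst_eq_self_of_wf hδ hσ]
  | _ => simp_all [Tm.tySubst]

theorem closed {e : Tm} {τ : Ty} (h : HasTy 0 [] e τ) : e.Closed :=
  ⟨fun _ => h.subst_eq_self fun _ hi => absurd hi (Nat.not_lt_zero _),
    fun _ => h.tySubst_eq_self fun _ hi => absurd hi (Nat.not_lt_zero _)⟩

theorem eq_tlam_of_isVal {v : Tm} {σ : Ty} (hv : IsVal v) (h : HasTy 0 [] v (.all σ)) :
    ∃ b, v = .tlam b ∧ HasTy 1 [] b σ := by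
  cases hv with
  | var => cases h with | var _ hx => simp at hx
  | tlam => cases h with | tlam h => exact ⟨_, rfl, by simpa using h⟩
  | _ => cases h

theorem numeral {Δ : ℕ} {Γ : List Ty} (hΓ : CtxWf Δ Γ) : ∀ n, HasTy Δ Γ (numeral n) natTy
  | 0 => .inj (ts := ![.unit, .var 0]) (j := 0) (by omega) .unit (natTy_wf Δ) (by exact .unit hΓ)
  | n + 1 => .inj (ts := ![.unit, .var 0]) (j := 1) (by omega) (numeral_isVal n) (natTy_wf Δ)
      (by exact numeral hΓ n)

end HasTy

/-! ### The compatible closure of a pair -/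

inductive CompatClosure (u v : Tm) (τ₀ : Ty) : ℕ → List Ty → Tm → Tm → Ty → Prop where
  | base : ∀ {Δ Γ}, CtxWf Δ Γ → CompatClosure u v τ₀ Δ Γ u v τ₀
  | var : ∀ {Δ Γ x τ}, CtxWf Δ Γ → Γ[x]? = some τ → CompatClosure u v τ₀ Δ Γ (.var x) (.var x) τ
  | unit : ∀ {Δ Γ}, CtxWf Δ Γ → CompatClosure u v τ₀ Δ Γ .unit .unit .unit
  | pair : ∀ {Δ Γ v₁ v₂ v₁' v₂' τ₁ τ₂}, IsVal v₁ → IsVal v₂ → IsVal v₁' → IsVal v₂' →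
      CompatClosure u v τ₀ Δ Γ v₁ v₁' τ₁ → CompatClosure u v τ₀ Δ Γ v₂ v₂' τ₂ →
      CompatClosure u v τ₀ Δ Γ (.pair v₁ v₂) (.pair v₁' v₂') (.prod τ₁ τ₂)
  | lam : ∀ {Δ Γ e e' τ₁ τ₂}, Ty.Wf Δ τ₁ → CompatClosure u v τ₀ Δ (τ₁ :: Γ) e e' τ₂ →
      CompatClosure u v τ₀ Δ Γ (.lam e) (.lam e') (.arrow τ₁ τ₂)
  | inj : ∀ {Δ Γ w w'} {m : ℕ} {ts : Fin m → Ty} {j : ℕ} (h : j < m),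
      IsVal w → IsVal w' → Ty.Wf Δ (.mu m ts) →
      CompatClosure u v τ₀ Δ Γ w w' (Ty.subst1 (.mu m ts) (ts ⟨j, h⟩)) →
      CompatClosure u v τ₀ Δ Γ (.inj j w) (.inj j w') (.mu m ts)
  | tlam : ∀ {Δ Γ e e' τ}, CompatClosure u v τ₀ (Δ + 1) (Γ.map (Ty.rename Nat.succ)) e e' τ →
      CompatClosure u v τ₀ Δ Γ (.tlam e) (.tlam e') (.all τ)
  | proj : ∀ {Δ Γ w w' τ₁ τ₂} (b : Bool), IsVal w → IsVal w' →
      CompatClosure u v τ₀ Δ Γ w w' (.prod τ₁ τ₂) →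
      CompatClosure u v τ₀ Δ Γ (.proj b w) (.proj b w') (bif b then τ₂ else τ₁)
  | app : ∀ {Δ Γ w w' e e' τ₁ τ₂}, IsVal w → IsVal w' →
      CompatClosure u v τ₀ Δ Γ w w' (.arrow τ₁ τ₂) → CompatClosure u v τ₀ Δ Γ e e' τ₁ →
      CompatClosure u v τ₀ Δ Γ (.app w e) (.app w' e') τ₂
  | case : ∀ {Δ Γ w w' τ'} {m : ℕ} {ts : Fin m → Ty} {es es' : Fin m → Tm},
      IsVal w → IsVal w' → CompatClosure u v τ₀ Δ Γ w w' (.mu m ts) →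
      (∀ j : Fin m, CompatClosure u v τ₀ Δ (Ty.subst1 (.mu m ts) (ts j) :: Γ) (es j) (es' j) τ') →
      CompatClosure u v τ₀ Δ Γ (.case w m es) (.case w' m es') τ'
  | tapp : ∀ {Δ Γ w w' τ σ}, IsVal w → IsVal w' → CompatClosure u v τ₀ Δ Γ w w' (.all τ) →
      Ty.Wf Δ σ → CompatClosure u v τ₀ Δ Γ (.tapp w σ) (.tapp w' σ) (Ty.subst1 σ τ)
  | choice : ∀ {Δ Γ}, CtxWf Δ Γ → CompatClosure u v τ₀ Δ Γ .choice .choice natTy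

namespace CompatClosure

variable {u v : Tm} {τ₀ : Ty} {Δ : ℕ} {Γ : List Ty} {e e' : Tm} {τ : Ty}

theorem compatible : Compatible (CompatClosure u v τ₀) :=
  ⟨.var, .unit, .pair, .lam, .inj, .tlam, .proj, .app, .case, .tapp, .choice⟩

theorem refl (h : HasTy Δ Γ e τ) : CompatClosure u v τ₀ Δ Γ e e τ := by
  induction h with
  | var hΓ hx => exact .var hΓ hx
  | unit hΓ => exact .unit hΓ
  | pair h1 h2 _ _ ih1 ih2 => exact .pair h1 h2 h1 h2 ih1 ih2
  | lam hτ _ ih => exact .lam hτ ih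
  | inj hj hval hwf _ ih => exact .inj hj hval hval hwf ih
  | tlam _ ih => exact .tlam ih
  | proj b hval _ ih => exact .proj b hval hval ih
  | app hval _ _ ih1 ih2 => exact .app hval hval ih1 ih2
  | case hval _ _ ih ihs => exact .case hval hval ih ihs
  | tapp hval _ hσ ih => exact .tapp hval hval ih hσ
  | choice hΓ => exact .choice hΓ

theorem isVal (hv : IsVal v) (h : CompatClosure u v τ₀ Δ Γ e e' τ) (he : IsVal e) : IsVal e' := by
  cases h with
  | base => exact hv
  | var => exact .var
  | unit => exact .unit
  | pair _ _ h1' h2' => exact .pair h1' h2'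
  | lam => exact .lam
  | inj _ _ hval' => exact .inj hval'
  | tlam => exact .tlam
  | _ => cases he

theorem hasTy (huT : HasTy 0 [] u τ₀) (hvT : HasTy 0 [] v τ₀)
    (h : CompatClosure u v τ₀ Δ Γ e e' τ) : HasTy Δ Γ e τ ∧ HasTy Δ Γ e' τ := by
  induction h with
  | base hΓ =>
      exact ⟨huT.weaken (Nat.zero_le _) (by simp) hΓ, hvT.weaken (Nat.zero_le _) (by simp) hΓ⟩
  | var hΓ hx => exact ⟨.var hΓ hx, .var hΓ hx⟩
  | unit hΓ => exact ⟨.unit hΓ, .unit hΓ⟩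
  | pair h1 h2 h1' h2' _ _ ih1 ih2 => exact ⟨.pair h1 h2 ih1.1 ih2.1, .pair h1' h2' ih1.2 ih2.2⟩
  | lam hτ _ ih => exact ⟨.lam hτ ih.1, .lam hτ ih.2⟩
  | inj hj hval hval' hwf _ ih => exact ⟨.inj hj hval hwf ih.1, .inj hj hval' hwf ih.2⟩
  | tlam _ ih => exact ⟨.tlam ih.1, .tlam ih.2⟩
  | proj b hval hval' _ ih => exact ⟨.proj b hval ih.1, .proj b hval' ih.2⟩
  | app hval hval' _ _ ih1 ih2 => exact ⟨.app hval ih1.1 ih2.1, .app hval' ih1.2 ih2.2⟩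
  | case hval hval' _ _ ih ihs =>
      exact ⟨.case hval ih.1 fun j => (ihs j).1, .case hval' ih.2 fun j => (ihs j).2⟩
  | tapp hval hval' _ hσ ih => exact ⟨.tapp hval ih.1 hσ, .tapp hval' ih.2 hσ⟩
  | choice hΓ => exact ⟨.choice hΓ, .choice hΓ⟩

theorem rename (huT : HasTy 0 [] u τ₀) (hvT : HasTy 0 [] v τ₀)
    (h : CompatClosure u v τ₀ Δ Γ e e' τ) {Γ' : List Ty} {f : ℕ → ℕ}
    (hf : ∀ (x : ℕ) κ, Γ[x]? = some κ → Γ'[f x]? = some κ) (hΓ' : CtxWf Δ Γ') :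
    CompatClosure u v τ₀ Δ Γ' (e.rename f) (e'.rename f) τ := by
  induction h generalizing Γ' f with
  | base =>
      rw [huT.closed.rename_eq, hvT.closed.rename_eq]
      exact .base hΓ'
  | var _ hx => exact .var hΓ' (hf _ _ hx)
  | unit => exact .unit hΓ'
  | pair h1 h2 h1' h2' _ _ ih1 ih2 =>
      exact .pair (h1.rename f) (h2.rename f) (h1'.rename f) (h2'.rename f)
        (ih1 hf hΓ') (ih2 hf hΓ')
  | lam hτ _ ih => exact .lam hτ (ih (getElem?_cons_liftR _ hf) (.cons hτ hΓ'))
  | inj hj hval hval' hwf _ ih =>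
      exact .inj hj (hval.rename f) (hval'.rename f) hwf (ih hf hΓ')
  | tlam _ ih =>
      exact .tlam (ih (getElem?_map_of_getElem? _ hf) (hΓ'.map_rename fun _ => Nat.succ_lt_succ))
  | proj b hval hval' _ ih => exact .proj b (hval.rename f) (hval'.rename f) (ih hf hΓ')
  | app hval hval' _ _ ih1 ih2 =>
      exact .app (hval.rename f) (hval'.rename f) (ih1 hf hΓ') (ih2 hf hΓ')
  | case hval hval' _ hbr ih ihs =>
      refine .case (hval.rename f) (hval'.rename f) (ih hf hΓ') fun j => ?_
      have hA := ((hbr j).hasTy huT hvT).1.ctxWf _ List.mem_cons_self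
      exact ihs j (getElem?_cons_liftR _ hf) (.cons hA hΓ')
  | tapp hval hval' _ hσ ih => exact .tapp (hval.rename f) (hval'.rename f) (ih hf hΓ') hσ
  | choice => exact .choice hΓ'

theorem tySubst (huT : HasTy 0 [] u τ₀) (hvT : HasTy 0 [] v τ₀) (hτ₀ : τ₀.Wf 0)
    (h : CompatClosure u v τ₀ Δ Γ e e' τ) {Δ' : ℕ} {δ : ℕ → Ty} (hδ : ∀ i < Δ, (δ i).Wf Δ') :
    CompatClosure u v τ₀ Δ' (Γ.map (Ty.subst δ)) (e.tySubst δ) (e'.tySubst δ) (τ.subst δ) := by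
  induction h generalizing Δ' δ with
  | base hΓ =>
      rw [huT.closed.2, hvT.closed.2, Ty.subst_eq_self_of_closed hτ₀]
      exact .base (hΓ.map_subst hδ)
  | var hΓ hx => exact .var (hΓ.map_subst hδ) (by simp [hx])
  | unit hΓ => exact .unit (hΓ.map_subst hδ)
  | pair h1 h2 h1' h2' _ _ ih1 ih2 =>
      exact .pair (h1.tySubst δ) (h2.tySubst δ) (h1'.tySubst δ) (h2'.tySubst δ) (ih1 hδ) (ih2 hδ)
  | lam hτ _ ih => exact .lam (Ty.wf_subst hδ hτ) (ih hδ)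
  | inj hj hval hval' hwf _ ih =>
      have := ih hδ
      rw [Ty.subst1_subst] at this
      exact .inj hj (hval.tySubst δ) (hval'.tySubst δ) (Ty.wf_subst hδ hwf) this
  | tlam _ ih =>
      have := ih (Ty.liftS_wf hδ)
      simp only [List.map_map, Function.comp_def, Ty.rename_succ_subst_liftS] at this
      exact .tlam (by simpa only [List.map_map, Function.comp_def] using this)
  | proj b hval hval' _ ih =>
      have := CompatClosure.proj b (hval.tySubst δ) (hval'.tySubst δ) (ih hδ)
      cases b <;> exact this
  | app hval hval' _ _ ih1 ih2 =>
      exact .app (hval.tySubst δ) (hval'.tySubst δ) (ih1 hδ) (ih2 hδ)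
  | case hval hval' _ _ ih ihs =>
      refine .case (hval.tySubst δ) (hval'.tySubst δ) (ih hδ) fun j => ?_
      have := ihs j hδ
      rw [List.map_cons, Ty.subst1_subst] at this
      exact this
  | tapp hval hval' _ hσ ih =>
      rw [Ty.subst1_subst]
      exact .tapp (hval.tySubst δ) (hval'.tySubst δ) (ih hδ) (Ty.wf_subst hδ hσ)
  | choice hΓ =>
      rw [Ty.subst_eq_self_of_closed (natTy_wf 0)]
      exact .choice (hΓ.map_subst hδ)

theorem tyRename (huT : HasTy 0 [] u τ₀) (hvT : HasTy 0 [] v τ₀) (hτ₀ : τ₀.Wf 0)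
    (h : CompatClosure u v τ₀ Δ Γ e e' τ) {Δ' : ℕ} {f : ℕ → ℕ} (hf : ∀ i < Δ, f i < Δ') :
    CompatClosure u v τ₀ Δ' (Γ.map (Ty.rename f)) (e.tyRename f) (e'.tyRename f) (τ.rename f) := by
  rw [funext (Ty.rename_eq_subst f), Tm.tyRename_eq_tySubst, Tm.tyRename_eq_tySubst]
  exact h.tySubst huT hvT hτ₀ hf

theorem cons_liftT (huT : HasTy 0 [] u τ₀) (hvT : HasTy 0 [] v τ₀) {Γ' : List Ty} {γ γ' : ℕ → Tm}
    (hrel : ∀ (i : ℕ) κ, Γ[i]? = some κ → CompatClosure u v τ₀ Δ Γ' (γ i) (γ' i) κ)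
    {A : Ty} (hA : A.Wf Δ) (hΓ' : CtxWf Δ Γ') :
    ∀ (i : ℕ) κ, (A :: Γ)[i]? = some κ →
      CompatClosure u v τ₀ Δ (A :: Γ') (CountChoice.liftT γ i) (CountChoice.liftT γ' i) κ
  | 0, _, hi => .var (.cons hA hΓ') hi
  | i + 1, κ, hi => (hrel i κ hi).rename huT hvT (fun _ _ => id) (.cons hA hΓ')

theorem subst (huT : HasTy 0 [] u τ₀) (hvT : HasTy 0 [] v τ₀) (hτ₀ : τ₀.Wf 0)
    (h : CompatClosure u v τ₀ Δ Γ e e' τ) {Γ' : List Ty} {γ γ' : ℕ → Tm}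
    (hγ : ∀ i, IsVal (γ i)) (hγ' : ∀ i, IsVal (γ' i))
    (hrel : ∀ (i : ℕ) κ, Γ[i]? = some κ → CompatClosure u v τ₀ Δ Γ' (γ i) (γ' i) κ)
    (hΓ' : CtxWf Δ Γ') :
    CompatClosure u v τ₀ Δ Γ' (e.subst γ) (e'.subst γ') τ := by
  induction h generalizing Γ' γ γ' with
  | base =>
      rw [huT.closed.1, hvT.closed.1]
      exact .base hΓ'
  | var _ hx => exact hrel _ _ hx
  | unit => exact .unit hΓ'
  | pair h1 h2 h1' h2' _ _ ih1 ih2 =>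
      exact .pair (h1.subst hγ) (h2.subst hγ) (h1'.subst hγ') (h2'.subst hγ')
        (ih1 hγ hγ' hrel hΓ') (ih2 hγ hγ' hrel hΓ')
  | lam hτ _ ih =>
      exact .lam hτ (ih (liftT_isVal hγ) (liftT_isVal hγ') (cons_liftT huT hvT hrel hτ hΓ')
        (.cons hτ hΓ'))
  | inj hj hval hval' hwf _ ih =>
      exact .inj hj (hval.subst hγ) (hval'.subst hγ') hwf (ih hγ hγ' hrel hΓ')
  | tlam _ ih =>
      refine .tlam (ih (fun i => (hγ i).tyRename _) (fun i => (hγ' i).tyRename _) (fun i κ hi => ?_)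
        (hΓ'.map_rename fun _ => Nat.succ_lt_succ))
      simp only [List.getElem?_map, Option.map_eq_some_iff] at hi
      obtain ⟨κ, hκ, rfl⟩ := hi
      exact (hrel i κ hκ).tyRename huT hvT hτ₀ fun _ => Nat.succ_lt_succ
  | proj b hval hval' _ ih => exact .proj b (hval.subst hγ) (hval'.subst hγ') (ih hγ hγ' hrel hΓ')
  | app hval hval' _ _ ih1 ih2 =>
      exact .app (hval.subst hγ) (hval'.subst hγ') (ih1 hγ hγ' hrel hΓ') (ih2 hγ hγ' hrel hΓ')
  | case hval hval' _ hbr ih ihs =>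
      refine .case (hval.subst hγ) (hval'.subst hγ') (ih hγ hγ' hrel hΓ') fun j => ?_
      have hA := ((hbr j).hasTy huT hvT).1.ctxWf _ List.mem_cons_self
      exact ihs j (liftT_isVal hγ) (liftT_isVal hγ') (cons_liftT huT hvT hrel hA hΓ') (.cons hA hΓ')
  | tapp hval hval' _ hσ ih =>
      exact .tapp (hval.subst hγ) (hval'.subst hγ') (ih hγ hγ' hrel hΓ') hσ
  | choice => exact .choice hΓ'

end CompatClosure

/-! ### Reduction in evaluation contexts -/

theorem step_plug {E : List Tm} (hE : ∀ f ∈ E, IsVal f) {x y : Tm} {l : Lbl}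
    (hs : Step x l y) : Step (plug E x) l (plug E y) := by
  induction E with
  | nil => exact hs
  | cons f E ih => exact .appArg (hE f List.mem_cons_self) (ih fun g hg => hE g (.tail _ hg))

theorem not_isVal_plug {E : List Tm} {x : Tm} (hx : ¬ IsVal x) : ¬ IsVal (plug E x) := by
  cases E with
  | nil => exact hx
  | cons => rintro ⟨⟩

theorem step_plug_inv {E : List Tm} (hE : ∀ f ∈ E, IsVal f) {x z : Tm} {l : Lbl}
    (hx : ¬ IsVal x) (hs : Step (plug E x) l z) : ∃ y, Step x l y ∧ z = plug E y := by
  induction E generalizing z with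
  | nil => exact ⟨z, hs, rfl⟩
  | cons f E ih =>
      cases hs with
      | beta hval => exact absurd hval (not_isVal_plug hx)
      | appArg _ hs' =>
          obtain ⟨y, hy, rfl⟩ := ih (fun g hg => hE g (.tail _ hg)) hs'
          exact ⟨y, hy, rfl⟩

theorem ECtxTy.isVal {E : List Tm} {κ τ : Ty} (h : ECtxTy E κ τ) : ∀ f ∈ E, IsVal f := by
  induction h with
  | nil => simp
  | cons hf _ _ ih => exact List.forall_mem_cons.2 ⟨hf, ih⟩

theorem Compatible.plug {Q : TIRel} (hQ : Compatible Q) (hrefl : ReflRel Q) {E : List Tm}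
    {κ τ : Ty} (hE : ECtxTy E κ τ) {x y : Tm} (h : Q 0 [] x y κ) :
    Q 0 [] (CountChoice.plug E x) (CountChoice.plug E y) τ := by
  induction hE with
  | nil => exact h
  | cons hf hfT _ ih => exact hQ.app hf hf (hrefl _ _ _ _ hfT) (ih h)

namespace MayConv

theorem of_isVal {v : Tm} (hv : IsVal v) : MayConv v := ⟨0, v, .refl, hv⟩

theorem head {e e₁ : Tm} {l : Lbl} (hs : Step e l e₁) (h : MayConv e₁) : MayConv e := by
  obtain ⟨n, w, hw, hv⟩ := h
  cases l
  case unfold => exact ⟨n + 1, w, .unfold hs hw, hv⟩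
  all_goals exact ⟨n, w, .other (by rintro ⟨⟩) hs hw, hv⟩

end MayConv

theorem mayConv_iff {e : Tm} : MayConv e ↔ ∃ w, Relation.ReflTransGen Red e w ∧ IsVal w := by
  constructor
  · rintro ⟨n, w, hw, hv⟩
    refine ⟨w, ?_, hv⟩
    clear hv
    induction hw with
    | refl => exact .refl
    | unfold hs _ ih | other _ hs _ ih => exact .head ⟨_, hs⟩ ih
  · rintro ⟨w, hw, hv⟩
    induction hw using Relation.ReflTransGen.head_induction_on with
    | refl => exact .of_isVal hv
    | head hs _ ih => exact ih.head hs.choose_spec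

theorem MayConv.plug_of_unique_step {E : List Tm} (hE : ∀ f ∈ E, IsVal f) {x x₀ : Tm}
    (hx : ¬ IsVal x) (huniq : ∀ l y, Step x l y → y = x₀) (h : MayConv (plug E x)) :
    MayConv (plug E x₀) := by
  obtain ⟨w, hw, hv⟩ := mayConv_iff.1 h
  cases hw using Relation.ReflTransGen.head_induction_on with
  | refl => exact absurd hv (not_isVal_plug hx)
  | head hs hrest =>
      obtain ⟨l, hs⟩ := hs
      obtain ⟨y, hy, rfl⟩ := step_plug_inv hE hx hs
      rw [← huniq l y hy]
      exact mayConv_iff.2 ⟨w, hrest, hv⟩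

theorem mayConv_plug_tapp_of_ctxMay {u v : Tm} {σ τ κ : Ty} {E : List Tm} (hu : IsVal u)
    (hv : IsVal v) (huv : CtxMay 0 [] (letTapp u τ) (letTapp v τ) σ) (hE : ECtxTy E σ κ)
    (h : MayConv (plug E (.tapp u τ))) : MayConv (plug E (.tapp v τ)) := by
  obtain ⟨Q, -, hrefl, -, hQ, hadequate, huvQ⟩ := huv
  have hu' : MayConv (plug E (letTapp u τ)) := h.head (step_plug hE.isVal (.beta hu))
  have hv' := hadequate _ _ _ (hQ.plug hrefl hE huvQ) hu'
  refine hv'.plug_of_unique_step hE.isVal (by rintro ⟨⟩) fun l y hs => ?_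
  cases hs with
  | beta => rfl
  | appArg _ hs => exact (hv.not_step hs).elim

/-! ### Simulation -/

inductive EvalCtxRel (u v : Tm) (τ₀ : Ty) : List Tm → List Tm → Ty → Ty → Prop where
  | nil : ∀ {κ}, EvalCtxRel u v τ₀ [] [] κ κ
  | cons : ∀ {f f' E E' κ κ₁ κ₂}, IsVal f → IsVal f' →
      CompatClosure u v τ₀ 0 [] f f' (.arrow κ₁ κ₂) → EvalCtxRel u v τ₀ E E' κ κ₁ →
      EvalCtxRel u v τ₀ (f :: E) (f' :: E') κ κ₂

namespace EvalCtxRel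

variable {u v : Tm} {τ₀ : Ty} {E E' : List Tm} {κ τ : Ty}

theorem plug (h : EvalCtxRel u v τ₀ E E' κ τ) {x y : Tm} (hxy : CompatClosure u v τ₀ 0 [] x y κ) :
    CompatClosure u v τ₀ 0 [] (CountChoice.plug E x) (CountChoice.plug E' y) τ := by
  induction h with
  | nil => exact hxy
  | cons hf hf' hC _ ih => exact .app hf hf' hC (ih hxy)

theorem ectxTy (huT : HasTy 0 [] u τ₀) (hvT : HasTy 0 [] v τ₀) (hκ : κ.Wf 0)
    (h : EvalCtxRel u v τ₀ E E' κ τ) : ECtxTy E κ τ ∧ ECtxTy E' κ τ := by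
  induction h with
  | nil => exact ⟨.nil hκ, .nil hκ⟩
  | cons hf hf' hC _ ih =>
      have hfT := hC.hasTy huT hvT
      exact ⟨.cons hf hfT.1 (ih hκ).1, .cons hf' hfT.2 (ih hκ).2⟩

end EvalCtxRel

namespace CompatClosure

variable {u v : Tm} {σ : Ty}

theorem subst1 {τ₀ : Ty} (huT : HasTy 0 [] u τ₀) (hvT : HasTy 0 [] v τ₀) (hτ₀ : τ₀.Wf 0)
    {Δ : ℕ} {A τ : Ty} {e e' a a' : Tm} (h : CompatClosure u v τ₀ Δ [A] e e' τ)
    (ha : IsVal a) (ha' : IsVal a') (haa' : CompatClosure u v τ₀ Δ [] a a' A) :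
    CompatClosure u v τ₀ Δ [] (CountChoice.subst1 a e) (CountChoice.subst1 a' e') τ := by
  refine h.subst huT hvT hτ₀ (by rintro (_ | i) <;> first | exact ha | exact .var)
    (by rintro (_ | i) <;> first | exact ha' | exact .var) ?_ .nil
  rintro (_ | i) κ hi
  · cases hi; exact haa'
  · simp at hi

theorem step_sim (huT : HasTy 0 [] u (.all σ)) (hvT : HasTy 0 [] v (.all σ)) (hσ : σ.Wf 1)
    (hu : IsVal u) (hv : IsVal v) {e e₁ : Tm} {l : Lbl} (hs : Step e l e₁) {e' : Tm} {τ : Ty}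
    (h : CompatClosure u v (.all σ) 0 [] e e' τ) :
    (∃ e₁', Step e' l e₁' ∧ CompatClosure u v (.all σ) 0 [] e₁ e₁' τ) ∨
    ∃ E E' τ', e = plug E (.tapp u τ') ∧ e' = plug E' (.tapp v τ') ∧ τ'.Wf 0 ∧
      EvalCtxRel u v (.all σ) E E' (Ty.subst1 τ' σ) τ := by
  induction hs generalizing e' τ with
  | projFst =>
      cases h with
      | base => cases hu
      | proj _ _ _ hC => cases hC with
        | pair _ _ hw₁ hw₂ hC₁ _ => exact .inl ⟨_, .projFst hw₁ hw₂, hC₁⟩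
  | projSnd =>
      cases h with
      | base => cases hu
      | proj _ _ _ hC => cases hC with
        | pair _ _ hw₁ hw₂ _ hC₂ => exact .inl ⟨_, .projSnd hw₁ hw₂, hC₂⟩
  | beta ha =>
      cases h with
      | base => cases hu
      | app _ _ hCf hCa => cases hCf with
        | lam _ hCc =>
            have ha' := hCa.isVal hv ha
            exact .inl ⟨_, .beta ha', hCc.subst1 huT hvT hσ ha ha' hCa⟩
  | @tbeta c τ' =>
      cases h with
      | base => cases hu
      | tapp _ _ hCw hτ' => cases hCw with
        | base => exact .inr ⟨[], [], τ', rfl, rfl, hτ', .nil⟩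
        | tlam hCc => exact .inl ⟨_, .tbeta, hCc.tySubst huT hvT hσ (consTy_var_wf hτ')⟩
  | caseInj hj hw =>
      cases h with
      | base => cases hu
      | case _ _ hCw hbr => cases hCw with
        | inj _ _ hw' _ hC₀ => exact .inl ⟨_, .caseInj hj hw', (hbr _).subst1 huT hvT hσ hw hw' hC₀⟩
  | choice n =>
      cases h with
      | base => cases hu
      | choice => exact .inl ⟨_, .choice n, refl (.numeral .nil n)⟩
  | appArg hf _ ih =>
      cases h with
      | base => cases hu
      | app _ hf' hCf hCa =>
          rcases ih hCa with ⟨a₁', hs', hC'⟩ | ⟨E, E', τ', rfl, rfl, hτ', hEE'⟩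
          · exact .inl ⟨_, .appArg hf' hs', .app hf hf' hCf hC'⟩
          · exact .inr ⟨_ :: E, _ :: E', τ', rfl, rfl, hτ', .cons hf hf' hCf hEE'⟩

theorem mayAdequate (huT : HasTy 0 [] u (.all σ)) (hvT : HasTy 0 [] v (.all σ)) (hσ : σ.Wf 1)
    (hu : IsVal u) (hv : IsVal v)
    (huv : ∀ τ, τ.Wf 0 → CtxMay 0 [] (letTapp u τ) (letTapp v τ) (Ty.subst1 τ σ)) :
    MayAdequate (CompatClosure u v (.all σ)) := by
  intro e e' τ h he
  obtain ⟨w, hw, hwVal⟩ := mayConv_iff.1 he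
  clear he
  induction hw using Relation.ReflTransGen.head_induction_on generalizing e' τ with
  | refl => exact .of_isVal (h.isVal hv hwVal)
  | head hs _ ih =>
      obtain ⟨l, hs⟩ := hs
      rcases h.step_sim huT hvT hσ hu hv hs with
        ⟨e₁', hs', h₁⟩ | ⟨E, E', τ', rfl, rfl, hτ', hEE'⟩
      · exact (ih _ _ h₁).head hs'
      obtain ⟨b, rfl, hb⟩ := huT.eq_tlam_of_isVal hu
      obtain ⟨hE, hE'⟩ := hEE'.ectxTy huT hvT (Ty.wf_subst1 hτ' hσ)
      obtain ⟨y, hy, rfl⟩ := step_plug_inv hE.isVal (by rintro ⟨⟩) hs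
      cases hy
      have hb' := (refl (u := .tlam b) (v := v) (τ₀ := .all σ) hb).tySubst huT hvT hσ
        (consTy_var_wf hτ')
      exact mayConv_plug_tapp_of_ctxMay .tlam hv (huv τ' hτ') hE'
        ((ih _ _ (hEE'.plug hb')).head (step_plug hE'.isVal .tbeta))

end CompatClosure

/-! ### Typed reflexive-transitive closure -/

def TIRel.typedReflTransGen (R : TIRel) : TIRel := fun Δ Γ e e' τ =>
  HasTy Δ Γ e τ ∧ HasTy Δ Γ e' τ ∧ Relation.ReflTransGen (fun a b => R Δ Γ a b τ) e e'

namespace TIRel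

open Relation

variable {R : TIRel}

theorem wellTypedRel_typedReflTransGen : WellTypedRel R.typedReflTransGen :=
  fun _ _ _ _ _ h => ⟨h.1, h.2.1⟩

theorem reflRel_typedReflTransGen : ReflRel R.typedReflTransGen :=
  fun _ _ _ _ h => ⟨h, h, .refl⟩

theorem transRel_typedReflTransGen : TransRel R.typedReflTransGen :=
  fun _ _ _ _ _ _ h₁ h₂ => ⟨h₁.1, h₂.2.1, h₁.2.2.trans h₂.2.2⟩

theorem mayAdequate_typedReflTransGen (hR : MayAdequate R) :
    MayAdequate R.typedReflTransGen := by
  rintro e e' τ ⟨-, -, h⟩ he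
  induction h with
  | refl => exact he
  | tail _ hbc ih => exact hR _ _ _ hbc ih

theorem compatible_typedReflTransGen (hrefl : ReflRel R)
    (hval : ∀ {Δ Γ e e' τ}, R Δ Γ e e' τ → IsVal e → IsVal e') (hR : Compatible R) :
    Compatible R.typedReflTransGen where
  var hΓ hx := ⟨.var hΓ hx, .var hΓ hx, .refl⟩
  unit hΓ := ⟨.unit hΓ, .unit hΓ, .refl⟩
  pair h₁ h₂ h₁' h₂' hR₁ hR₂ :=
    ⟨.pair h₁ h₂ hR₁.1 hR₂.1, .pair h₁' h₂' hR₁.2.1 hR₂.2.1,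
      (hR₁.2.2.lift_of_invariant (P := IsVal) (fun t => Tm.pair t _) (fun _ _ => hval)
        (fun _ _ hab ha => hR.pair ha h₂ (hval hab ha) h₂ hab (hrefl _ _ _ _ hR₂.1)) h₁).trans
      (hR₂.2.2.lift_of_invariant (P := IsVal) (Tm.pair _) (fun _ _ => hval)
        (fun _ _ hab ha => hR.pair h₁' ha h₁' (hval hab ha) (hrefl _ _ _ _ hR₁.2.1) hab) h₂)⟩
  lam hτ h := ⟨.lam hτ h.1, .lam hτ h.2.1, h.2.2.lift _ fun _ _ => hR.lam hτ⟩
  inj hj hw hw' hwf h :=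
    ⟨.inj hj hw hwf h.1, .inj hj hw' hwf h.2.1,
      h.2.2.lift_of_invariant (P := IsVal) _ (fun _ _ => hval)
        (fun _ _ hab ha => hR.inj hj ha (hval hab ha) hwf hab) hw⟩
  tlam h := ⟨.tlam h.1, .tlam h.2.1, h.2.2.lift _ fun _ _ => hR.tlam⟩
  proj b hw hw' h :=
    ⟨.proj b hw h.1, .proj b hw' h.2.1,
      h.2.2.lift_of_invariant (P := IsVal) _ (fun _ _ => hval)
        (fun _ _ hab ha => hR.proj b ha (hval hab ha) hab) hw⟩
  app hw hw' hRw hRe :=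
    ⟨.app hw hRw.1 hRe.1, .app hw' hRw.2.1 hRe.2.1,
      (hRw.2.2.lift_of_invariant (P := IsVal) (fun t => Tm.app t _) (fun _ _ => hval)
        (fun _ _ hab ha => hR.app ha (hval hab ha) hab (hrefl _ _ _ _ hRe.1)) hw).trans
      (hRe.2.2.lift _ fun _ _ => hR.app hw' hw' (hrefl _ _ _ _ hRw.2.1))⟩
  case hw hw' hRw hRes :=
    ⟨.case hw hRw.1 fun j => (hRes j).1, .case hw' hRw.2.1 fun j => (hRes j).2.1,
      (hRw.2.2.lift_of_invariant (P := IsVal) (fun t => Tm.case t _ _) (fun _ _ => hval)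
        (fun _ _ hab ha => hR.case ha (hval hab ha) hab fun j => hrefl _ _ _ _ (hRes j).1) hw).trans
      ((ReflTransGen.pi (fun j => hrefl _ _ _ _ (hRes j).1) (fun j => hrefl _ _ _ _ (hRes j).2.1)
        fun j => (hRes j).2.2).lift _ fun _ _ => hR.case hw' hw' (hrefl _ _ _ _ hRw.2.1))⟩
  tapp hw hw' h hσ :=
    ⟨.tapp hw h.1 hσ, .tapp hw' h.2.1 hσ,
      h.2.2.lift_of_invariant (P := IsVal) (fun t => Tm.tapp t _) (fun _ _ => hval)
        (fun _ _ hab ha => hR.tapp ha (hval hab ha) hab hσ) hw⟩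
  choice hΓ := ⟨.choice hΓ, .choice hΓ, .refl⟩

end TIRel

theorem ctxMay_of_forall_letTapp (σ : Ty) (hσ : σ.Wf 1) (u v : Tm) (hu : IsVal u) (hv : IsVal v)
    (huT : HasTy 0 [] u (.all σ)) (hvT : HasTy 0 [] v (.all σ))
    (h : ∀ τ, τ.Wf 0 → CtxMay 0 [] (letTapp u τ) (letTapp v τ) (Ty.subst1 τ σ)) :
    CtxMay 0 [] u v (.all σ) :=
  ⟨TIRel.typedReflTransGen (CompatClosure u v (.all σ)), TIRel.wellTypedRel_typedReflTransGen,
    TIRel.reflRel_typedReflTransGen, TIRel.transRel_typedReflTransGen,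
    TIRel.compatible_typedReflTransGen (fun _ _ _ _ => CompatClosure.refl)
      (CompatClosure.isVal hv) CompatClosure.compatible,
    TIRel.mayAdequate_typedReflTransGen (CompatClosure.mayAdequate huT hvT hσ hu hv h),
    huT, hvT, .single (.base .nil)⟩

/-- **Extensionality for ∀-types (may)** (Lemma 4.14): if `u` and `v` are
closed values of type `∀α.σ` such that `u τ ≅↓ctx v τ : σ[τ/α]` for every
closed type `τ` (where `w τ` abbreviates `let f = w in f τ`), then
`u ≅↓ctx v : ∀α.σ`. -/
theorem forall_extensionality_may (σ : Ty) (hσ : Ty.Wf 1 σ)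
    (u v : Tm) (hu : IsVal u) (hv : IsVal v)
    (huT : HasTy 0 [] u (.all σ)) (hvT : HasTy 0 [] v (.all σ))
    (h : ∀ τ, Ty.Wf 0 τ →
      CtxMayEq 0 [] (letTapp u τ) (letTapp v τ) (Ty.subst1 τ σ)) :
    CtxMayEq 0 [] u v (.all σ) :=
  ⟨ctxMay_of_forall_letTapp σ hσ u v hu hv huT hvT fun τ hτ => (h τ hτ).1,
    ctxMay_of_forall_letTapp σ hσ v u hv hu hvT huT fun τ hτ => (h τ hτ).2⟩

end CountChoice
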